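/- Parallel reduction of the FMC satisfies the diamond property: if N ⇐ M ⇒ P then there exists a term Q with N ⇒ Q and P ⇒ Q. -/
import Mathlib



/-- Terms of the Functional Machine Calculus over a set `A` of locations,
in de Bruijn representation (so terms are automatically identified up to
α-equivalence): nil, variable prefix, push/application on a location,
and pop/abstraction on a location. -/
inductive Tm (A : Type) : Type
  | star : Tm A
  | var  : Nat → Tm A → Tm A
  | push : Tm A → A → Tm A → Tm A
  | pop  : A → Tm A → Tm A

namespace Tm

variable {A : Type}

/-- Lifting of a renaming under a binder. -/
def liftF (f : Nat → Nat) : Nat → Nat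
  | 0 => 0
  | n+1 => f n + 1

/-- Renaming of de Bruijn indices. -/
def rename (f : Nat → Nat) : Tm A → Tm A
  | star => star
  | var n M => var (f n) (rename f M)
  | push N a M => push (rename f N) a (rename f M)
  | pop a M => pop a (rename (liftF f) M)

/-- Capture-avoiding composition `N ; M`. -/
def comp : Tm A → Tm A → Tm A
  | star, P => P
  | var n N, P => var n (comp N P)
  | push Q a N, P => push Q a (comp N P)
  | pop a N, P => pop a (comp N (rename Nat.succ P))

/-- Lifting of a substitution under a binder. -/
def liftS (σ : Nat → Tm A) : Nat → Tm A
  | 0 => var 0 star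
  | n+1 => rename Nat.succ (σ n)

/-- Capture-avoiding simultaneous substitution; note
`{N/x}(x.M) = N ; {N/x}M`. -/
def subst (σ : Nat → Tm A) : Tm A → Tm A
  | star => star
  | var n M => comp (σ n) (subst σ M)
  | push N a M => push (subst σ N) a (subst σ M)
  | pop a M => pop a (subst (liftS σ) M)

/-- Capture-avoiding substitution `{N/x}M` of `N` for the variable
bound immediately outside `M`. -/
def subst1 (N : Tm A) : Tm A → Tm A :=
  subst (fun n => match n with | 0 => N | n+1 => var n star)

end Tm

/-- Head contexts `H ::= {} | [M]a.H | a<x>.H`. -/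
inductive Hd (A : Type) : Type
  | hole : Hd A
  | push : Tm A → A → Hd A → Hd A
  | pop  : A → Hd A → Hd A

namespace Hd

variable {A : Type}

/-- Plugging a term into the hole of a head context (binders of `H` capture). -/
def plug : Hd A → Tm A → Tm A
  | hole, M => M
  | push N a H, M => Tm.push N a (plug H M)
  | pop a H, M => Tm.pop a (plug H M)

/-- The number of binders of a head context. -/
def binders : Hd A → Nat
  | hole => 0
  | push _ _ H => binders H
  | pop _ H => binders H + 1

/-- The locations occurring along the spine of a head context. -/
def locs : Hd A → List A
  | hole => []
  | push _ a H => a :: locs H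
  | pop a H => a :: locs H

end Hd

mutual
/-- Redex-marked FMC terms: a term together with a selection of marked
β-redexes, represented by the `redex` constructor `[N]a✓.H.✓a<x>.M`. -/
inductive MTm (A : Type) : Type
  | star : MTm A
  | var  : Nat → MTm A → MTm A
  | push : MTm A → A → MTm A → MTm A
  | pop  : A → MTm A → MTm A
  | redex : MTm A → A → MHd A → MTm A → MTm A
/-- Head contexts of redex-marked terms. -/
inductive MHd (A : Type) : Type
  | hole : MHd A
  | push : MTm A → A → MHd A → MHd A
  | pop  : A → MHd A → MHd A
end

namespace MHd
variable {A : Type}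
/-- The number of binders of a marked head context. -/
def binders : MHd A → Nat
  | hole => 0
  | push _ _ H => binders H
  | pop _ H => binders H + 1
/-- The locations occurring along the spine of a marked head context. -/
def locs : MHd A → List A
  | hole => []
  | push _ a H => a :: locs H
  | pop a H => a :: locs H
end MHd

mutual
/-- Well-formedness of a marked term: every marked redex is a genuine
β-redex, i.e. its location does not occur in the intervening head context
(in de Bruijn style the freshness condition on binders is automatic). -/
def MTm.WF {A : Type} : MTm A → Prop
  | .star => True
  | .var _ M => M.WF
  | .push N _ M => N.WF ∧ M.WF
  | .pop _ M => M.WF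
  | .redex N a H M => a ∉ H.locs ∧ N.WF ∧ H.WF ∧ M.WF
def MHd.WF {A : Type} : MHd A → Prop
  | .hole => True
  | .push N _ H => N.WF ∧ H.WF
  | .pop _ H => H.WF
end

mutual
/-- The underlying (unmarked) term of a marked term. -/
def MTm.erase {A : Type} : MTm A → Tm A
  | .star => .star
  | .var n M => .var n M.erase
  | .push N a M => .push N.erase a M.erase
  | .pop a M => .pop a M.erase
  | .redex N a H M => .push N.erase a (H.erase.plug (.pop a M.erase))
/-- The underlying head context of a marked head context. -/
def MHd.erase {A : Type} : MHd A → Hd A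
  | .hole => .hole
  | .push N a H => .push N.erase a H.erase
  | .pop a H => .pop a H.erase
end

mutual
/-- The marked reduct `(M^X)_X`: the simultaneous contraction of all
marked redexes. -/
def MTm.reduct {A : Type} : MTm A → Tm A
  | .star => .star
  | .var n M => .var n M.reduct
  | .push N a M => .push N.reduct a M.reduct
  | .pop a M => .pop a M.reduct
  | .redex N _ H M =>
      H.reduct.plug (Tm.subst1 (Tm.rename (· + H.reduct.binders) N.reduct) M.reduct)
/-- The marked reduct of a marked head context. -/
def MHd.reduct {A : Type} : MHd A → Hd A
  | .hole => .hole
  | .push N a H => .push N.reduct a H.reduct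
  | .pop a H => .pop a H.reduct
end

/-- Parallel reduction: `M ⇒ N` iff `N` is the marked reduct of some
marking of β-redexes of `M`. -/
def Par {A : Type} (M N : Tm A) : Prop :=
  ∃ W : MTm A, W.WF ∧ W.erase = M ∧ W.reduct = N

namespace FMC
open Tm

variable {A : Type}

/-- identity substitution -/
def ids : Nat → Tm A := fun n => .var n .star

/-- cons for substitutions -/
def sone (N : Tm A) : Nat → Tm A
  | 0 => N
  | n+1 => .var n .star

theorem subst1_eq (N M : Tm A) : Tm.subst1 N M = Tm.subst (sone N) M := by
  unfold Tm.subst1 sone; rfl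

/-- iterated liftF -/
def liftFn : Nat → (Nat → Nat) → (Nat → Nat)
  | 0, f => f
  | b+1, f => liftFn b (liftF f)

/-- iterated liftS -/
def liftSn : Nat → (Nat → Tm A) → (Nat → Tm A)
  | 0, σ => σ
  | b+1, σ => liftSn b (liftS σ)

theorem liftF_comp (f g : Nat → Nat) : (fun n => liftF f (liftF g n)) = liftF (fun n => f (g n)) := by
  funext n; cases n <;> rfl

theorem rename_rename (f g : Nat → Nat) (M : Tm A) :
    rename f (rename g M) = rename (fun n => f (g n)) M := by
  induction M generalizing f g with
  | star => rfl
  | var n M ih => simp [rename, ih]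
  | push N a M ihN ihM => simp [rename, ihN, ihM]
  | pop a M ih => simp [rename, ih, liftF_comp]

theorem rename_comp (f : Nat → Nat) (M P : Tm A) :
    rename f (comp M P) = comp (rename f M) (rename f P) := by
  induction M generalizing f P with
  | star => rfl
  | var n M ih => simp [comp, rename, ih]
  | push N a M ihN ihM => simp [comp, rename, ihM]
  | pop a M ih =>
      simp [comp, rename, ih]
      rw [rename_rename, rename_rename]
      rfl

theorem comp_assoc (M Y Z : Tm A) : comp (comp M Y) Z = comp M (comp Y Z) := by
  induction M generalizing Y Z with
  | star => rfl
  | var n M ih => simp [comp, ih]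
  | push N a M ihN ihM => simp [comp, ihM]
  | pop a M ih => simp [comp, ih, rename_comp]

theorem subst_rename (σ : Nat → Tm A) (f : Nat → Nat) (M : Tm A) :
    subst σ (rename f M) = subst (fun n => σ (f n)) M := by
  induction M generalizing σ f with
  | star => rfl
  | var n M ih => simp [rename, subst, ih]
  | push N a M ihN ihM => simp [rename, subst, ihN, ihM]
  | pop a M ih =>
      simp [rename, subst, ih]
      congr 1
      funext n; cases n <;> rfl

theorem rename_subst (f : Nat → Nat) (σ : Nat → Tm A) (M : Tm A) :
    rename f (subst σ M) = subst (fun n => rename f (σ n)) M := by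
  induction M generalizing σ f with
  | star => rfl
  | var n M ih => simp [rename, subst, ih, rename_comp]
  | push N a M ihN ihM => simp [rename, subst, ihN, ihM]
  | pop a M ih =>
      simp [rename, subst, ih]
      congr 1
      funext n; cases n with
      | zero => rfl
      | succ n =>
          show rename (liftF f) (rename Nat.succ (σ n)) = rename Nat.succ (rename f (σ n))
          rw [rename_rename, rename_rename]; rfl

theorem subst_comp (σ : Nat → Tm A) (M P : Tm A) :
    subst σ (comp M P) = comp (subst σ M) (subst σ P) := by
  induction M generalizing σ P with
  | star => rfl
  | var n M ih => simp [comp, subst, ih, comp_assoc]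
  | push N a M ihN ihM => simp [comp, subst, ihM]
  | pop a M ih =>
      simp [comp, subst, ih]
      congr 1
      rw [subst_rename, rename_subst]
      rfl

theorem subst_subst (τ σ : Nat → Tm A) (M : Tm A) :
    subst τ (subst σ M) = subst (fun n => subst τ (σ n)) M := by
  induction M generalizing σ τ with
  | star => rfl
  | var n M ih => simp [subst, ih, subst_comp]
  | push N a M ihN ihM => simp [subst, ihN, ihM]
  | pop a M ih =>
      simp [subst, ih]
      congr 1
      funext n; cases n with
      | zero =>
          show subst (liftS τ) (.var 0 .star) = .var 0 .star
          simp [subst, liftS, comp]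
      | succ n =>
          show subst (liftS τ) (rename Nat.succ (σ n)) = rename Nat.succ (subst τ (σ n))
          rw [subst_rename, rename_subst]
          rfl

theorem subst_ids (M : Tm A) : subst (ids : Nat → Tm A) M = M := by
  induction M with
  | star => rfl
  | var n M ih => simp [subst, ids, comp, ih]
  | push N a M ihN ihM => simp [subst, ihN, ihM]
  | pop a M ih =>
      simp [subst]
      have : (liftS (ids : Nat → Tm A)) = (ids : Nat → Tm A) := by
        funext n; cases n <;> rfl
      rw [this, ih]

theorem subst_varf (f : Nat → Nat) (M : Tm A) :
    subst (fun n => .var (f n) .star) M = rename f M := by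
  induction M generalizing f with
  | star => rfl
  | var n M ih => simp [subst, rename, comp, ih]
  | push N a M ihN ihM => simp [subst, rename, ihN, ihM]
  | pop a M ih =>
      simp [subst, rename]
      rw [← ih (liftF f)]
      congr 1
      funext n; cases n <;> rfl

theorem rename_id (M : Tm A) : rename (fun n => n) M = M := by
  rw [← subst_varf]
  exact subst_ids M

theorem rename_add_zero (M : Tm A) : rename (· + 0) M = M := by
  have : ((· + 0) : Nat → Nat) = fun n => n := by funext n; omega
  rw [this, rename_id]

theorem comp_star (M : Tm A) : comp M .star = M := by
  induction M with
  | star => rfl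
  | var n M ih => simp [comp, ih]
  | push N a M ihN ihM => simp [comp, ihM]
  | pop a M ih => simpa [comp, rename] using ih

theorem subst1_rename_succ (X Z : Tm A) : Tm.subst1 X (rename Nat.succ Z) = Z := by
  rw [subst1_eq, subst_rename]
  show subst (fun n => (ids : Nat → Tm A) n) Z = Z
  exact subst_ids Z

theorem subst_subst1 (τ : Nat → Tm A) (X Y : Tm A) :
    subst τ (Tm.subst1 X Y) = Tm.subst1 (subst τ X) (subst (liftS τ) Y) := by
  rw [subst1_eq, subst1_eq, subst_subst, subst_subst]
  congr 1
  funext n; cases n with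
  | zero => show subst τ X = comp (subst τ X) (subst _ .star); simp [subst, comp_star]
  | succ n =>
      show subst τ (.var n .star) = subst (sone (subst τ X)) (rename Nat.succ (τ n))
      rw [subst_rename]
      show comp (τ n) (subst τ .star) = subst (fun k => sone (subst τ X) (k+1)) (τ n)
      show comp (τ n) .star = subst (fun k => .var k .star) (τ n)
      rw [comp_star]
      exact (subst_ids (τ n)).symm

theorem rename_subst1 (f : Nat → Nat) (X Y : Tm A) :
    rename f (Tm.subst1 X Y) = Tm.subst1 (rename f X) (rename (liftF f) Y) := by
  rw [subst1_eq, subst1_eq, rename_subst, subst_rename]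
  congr 1
  funext n; cases n <;> rfl

theorem liftSn_succ' (b : Nat) (σ : Nat → Tm A) :
    liftSn (b+1) σ = liftS (liftSn b σ) := by
  induction b generalizing σ with
  | zero => rfl
  | succ b ih => show liftSn (b+1) (liftS σ) = _; rw [ih]; rfl

theorem liftSn_add (b x : Nat) (σ : Nat → Tm A) :
    liftSn b σ (x + b) = rename (· + b) (σ x) := by
  induction b generalizing σ x with
  | zero =>
      show σ x = rename (· + 0) (σ x)
      have : ((· + 0) : Nat → Nat) = fun n => n := by funext n; omega
      rw [this]
      have : rename (fun n => n) (σ x) = subst (fun n => Tm.var n Tm.star) (σ x) := (subst_varf _ _).symm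
      rw [this]; exact (subst_ids _).symm
  | succ b ih =>
      show liftSn b (liftS σ) (x + (b+1)) = _
      have hx : x + (b+1) = (x+1) + b := by omega
      rw [hx, ih]
      show rename (· + b) (rename Nat.succ (σ x)) = _
      rw [rename_rename]
      congr 1
      funext n; omega

theorem liftSn_lt (b n : Nat) (σ : Nat → Tm A) (h : n < b) :
    liftSn b σ n = .var n .star := by
  induction b generalizing σ n with
  | zero => omega
  | succ b ih =>
      show liftSn b (liftS σ) n = _
      by_cases hn : n < b
      · exact ih n _ hn
      · have hb : n = b := by omega
        have h0 := liftSn_add b 0 (liftS σ)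
        simp only [Nat.zero_add] at h0
        rw [hb, h0]
        show rename (· + b) (.var 0 .star) = _
        simp [rename, hb]

/-- key shift absorption: substituting a `sone` substitution lifted `j` times
into a term shifted by `j+1+m` just lowers the shift by one. -/
theorem liftSn_sone_rename (j m : Nat) (X T : Tm A) :
    subst (liftSn j (sone X)) (rename (· + (j+1+m)) T) = rename (· + (j+m)) T := by
  rw [subst_rename]
  rw [← subst_varf (fun x => x + (j+m)) T]
  congr 1
  funext n
  have h : n + (j+1+m) = (n+1+m) + j := by omega
  rw [h, liftSn_add]
  show rename (· + j) (sone X (n+1+m)) = _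
  have : n+1+m = (n+m)+1 := by omega
  rw [this]
  show rename (· + j) (.var (n+m) .star) = _
  simp [rename]
  omega

theorem subst1_rename_shift (X P : Tm A) (b : Nat) :
    Tm.subst1 X (rename (· + (b+1)) P) = rename (· + b) P := by
  have h := liftSn_sone_rename 0 b X P
  rw [subst1_eq]
  have e1 : ((· + (0+1+b)) : Nat → Nat) = (· + (b+1)) := by funext n; omega
  have e2 : ((· + (0+b)) : Nat → Nat) = (· + b) := by funext n; omega
  rw [e1, e2] at h
  exact h

end FMC

namespace Hd
variable {A : Type}

def append : Hd A → Hd A → Hd A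
  | hole, G => G
  | push N a H, G => push N a (append H G)
  | pop a H, G => pop a (append H G)

theorem plug_append (H G : Hd A) (T : Tm A) :
    (append H G).plug T = H.plug (G.plug T) := by
  induction H with
  | hole => rfl
  | push N a H ih => simp [append, plug, ih]
  | pop a H ih => simp [append, plug, ih]

theorem locs_append (H G : Hd A) : (append H G).locs = H.locs ++ G.locs := by
  induction H with
  | hole => rfl
  | push N a H ih => simp [append, locs, ih]
  | pop a H ih => simp [append, locs, ih]

theorem binders_append (H G : Hd A) : (append H G).binders = H.binders + G.binders := by
  induction H with
  | hole => simp [append, binders]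
  | push N a H ih => simp [append, binders, ih]
  | pop a H ih => simp [append, binders, ih]; omega

/-- apply a substitution to the components of a head context -/
def substH (σ : Nat → Tm A) : Hd A → Hd A
  | hole => hole
  | push N a H => push (Tm.subst σ N) a (substH σ H)
  | pop a H => pop a (substH (Tm.liftS σ) H)

def renameH (f : Nat → Nat) : Hd A → Hd A
  | hole => hole
  | push N a H => push (Tm.rename f N) a (renameH f H)
  | pop a H => pop a (renameH (Tm.liftF f) H)

theorem locs_substH (σ : Nat → Tm A) (H : Hd A) : (substH σ H).locs = H.locs := by
  induction H generalizing σ with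
  | hole => rfl
  | push N a H ih => simp [substH, locs, ih]
  | pop a H ih => simp [substH, locs, ih]

theorem binders_substH (σ : Nat → Tm A) (H : Hd A) : (substH σ H).binders = H.binders := by
  induction H generalizing σ with
  | hole => rfl
  | push N a H ih => simp [substH, binders, ih]
  | pop a H ih => simp [substH, binders, ih]

theorem locs_renameH (f : Nat → Nat) (H : Hd A) : (renameH f H).locs = H.locs := by
  induction H generalizing f with
  | hole => rfl
  | push N a H ih => simp [renameH, locs, ih]
  | pop a H ih => simp [renameH, locs, ih]

theorem binders_renameH (f : Nat → Nat) (H : Hd A) : (renameH f H).binders = H.binders := by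
  induction H generalizing f with
  | hole => rfl
  | push N a H ih => simp [renameH, binders, ih]
  | pop a H ih => simp [renameH, binders, ih]

theorem subst_plug (σ : Nat → Tm A) (H : Hd A) (T : Tm A) :
    Tm.subst σ (H.plug T) = (substH σ H).plug (Tm.subst (FMC.liftSn H.binders σ) T) := by
  induction H generalizing σ with
  | hole => rfl
  | push N a H ih => simp [plug, substH, Tm.subst, ih, binders]
  | pop a H ih =>
      show Tm.pop a (Tm.subst (Tm.liftS σ) (H.plug T)) = Tm.pop a ((substH (Tm.liftS σ) H).plug (Tm.subst (FMC.liftSn H.binders (Tm.liftS σ)) T))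
      rw [ih]

theorem rename_plug (f : Nat → Nat) (H : Hd A) (T : Tm A) :
    Tm.rename f (H.plug T) = (renameH f H).plug (Tm.rename (FMC.liftFn H.binders f) T) := by
  induction H generalizing f with
  | hole => rfl
  | push N a H ih =>
      show Tm.push (Tm.rename f N) a (Tm.rename f (H.plug T)) = _
      rw [ih]; rfl
  | pop a H ih =>
      show Tm.pop a (Tm.rename (Tm.liftF f) (H.plug T)) = _
      rw [ih]; rfl

theorem comp_plug (H : Hd A) (T P : Tm A) :
    Tm.comp (H.plug T) P = H.plug (Tm.comp T (Tm.rename (· + H.binders) P)) := by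
  induction H generalizing P with
  | hole =>
      show Tm.comp T P = Tm.comp T (Tm.rename (· + 0) P)
      rw [FMC.rename_add_zero]
  | push N a H ih =>
      show Tm.push N a (Tm.comp (H.plug T) P) = _
      rw [ih]; rfl
  | pop a H ih =>
      show Tm.pop a (Tm.comp (H.plug T) (Tm.rename Nat.succ P)) = Tm.pop a (H.plug (Tm.comp T (Tm.rename (· + (H.binders + 1)) P)))
      rw [ih, FMC.rename_rename]
      have : (fun n => (Nat.succ n) + H.binders) = ((· + (H.binders + 1)) : Nat → Nat) := by
        funext n; omega
      rw [this]

end Hd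

namespace FMC
variable {A : Type}

/-- Parallel reduction on terms and head contexts simultaneously,
encoded as a single inductive on a sum. -/
inductive PdG : (Tm A ⊕ Hd A) → (Tm A ⊕ Hd A) → Prop
  | star : PdG (.inl .star) (.inl .star)
  | var {M M' : Tm A} (n : Nat) : PdG (.inl M) (.inl M') →
      PdG (.inl (.var n M)) (.inl (.var n M'))
  | push {N N' M M' : Tm A} (a : A) : PdG (.inl N) (.inl N') → PdG (.inl M) (.inl M') →
      PdG (.inl (.push N a M)) (.inl (.push N' a M'))
  | pop {M M' : Tm A} (a : A) : PdG (.inl M) (.inl M') →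
      PdG (.inl (.pop a M)) (.inl (.pop a M'))
  | redex {N N' M M' : Tm A} {H H' : Hd A} (a : A) :
      a ∉ H.locs → PdG (.inl N) (.inl N') → PdG (.inr H) (.inr H') →
      PdG (.inl M) (.inl M') →
      PdG (.inl (.push N a (H.plug (.pop a M))))
          (.inl (H'.plug (Tm.subst1 (Tm.rename (· + H'.binders) N') M')))
  | hhole : PdG (.inr .hole) (.inr .hole)
  | hpush {N N' : Tm A} {H H' : Hd A} (a : A) :
      PdG (.inl N) (.inl N') → PdG (.inr H) (.inr H') →
      PdG (.inr (.push N a H)) (.inr (.push N' a H'))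
  | hpop {H H' : Hd A} (a : A) : PdG (.inr H) (.inr H') →
      PdG (.inr (.pop a H)) (.inr (.pop a H'))

def Pd (M N : Tm A) : Prop := PdG (.inl M) (.inl N)
def PHr (H H' : Hd A) : Prop := PdG (.inr H) (.inr H')

theorem Pd.refl (M : Tm A) : Pd M M := by
  have : (∀ M : Tm A, Pd M M) ∧ (∀ H : Hd A, PHr H H) := by
    constructor
    · intro M
      induction M with
      | star => exact PdG.star
      | var n M ih => exact PdG.var n ih
      | push N a M ihN ihM => exact PdG.push a ihN ihM
      | pop a M ih => exact PdG.pop a ih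
    · intro H
      induction H with
      | hole => exact PdG.hhole
      | push N a H ihH =>
          exact PdG.hpush a (by
            induction N with
            | star => exact PdG.star
            | var n M ih => exact PdG.var n ih
            | push N a M ihN ihM => exact PdG.push a ihN ihM
            | pop a M ih => exact PdG.pop a ih) ihH
      | pop a H ih => exact PdG.hpop a ih
  exact this.1 M

theorem PHr.refl (H : Hd A) : PHr H H := by
  induction H with
  | hole => exact PdG.hhole
  | push N a H ihH => exact PdG.hpush a (Pd.refl N) ihH
  | pop a H ih => exact PdG.hpop a ih

/-- PHr preserves locs and binders. -/
theorem PHr.locs_eq {H H' : Hd A} (h : PHr H H') : H'.locs = H.locs ∧ H'.binders = H.binders := by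
  induction H generalizing H' with
  | hole => cases h; exact ⟨rfl, rfl⟩
  | push N a H ih =>
      cases h with
      | hpush a hN hH => have := ih hH; simp [Hd.locs, Hd.binders, this.1, this.2]
  | pop a H ih =>
      cases h with
      | hpop a hH => have := ih hH; simp [Hd.locs, Hd.binders, this.1, this.2]

/-- inversion for PHr on appended contexts ending in a pop -/
theorem PHr.append_pop_inv {H₃ H₄ : Hd A} {c : A} {W : Hd A}
    (h : PHr (Hd.append H₃ (Hd.pop c H₄)) W) :
    ∃ W₃ W₄, W = Hd.append W₃ (Hd.pop c W₄) ∧ PHr H₃ W₃ ∧ PHr H₄ W₄ := by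
  induction H₃ generalizing W with
  | hole =>
      cases h with
      | hpop c hH => exact ⟨.hole, _, rfl, PdG.hhole, hH⟩
  | push N a H ih =>
      cases h with
      | hpush a hN hH =>
          obtain ⟨W₃, W₄, rfl, h₃, h₄⟩ := ih hH
          exact ⟨.push _ a W₃, W₄, rfl, PdG.hpush a hN h₃, h₄⟩
  | pop a H ih =>
      cases h with
      | hpop a hH =>
          obtain ⟨W₃, W₄, rfl, h₃, h₄⟩ := ih hH
          exact ⟨.pop a W₃, W₄, rfl, PdG.hpop a h₃, h₄⟩

theorem PHr.append {H₁ H₁' H₂ H₂' : Hd A} (h₁ : PHr H₁ H₁') (h₂ : PHr H₂ H₂') :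
    PHr (Hd.append H₁ H₂) (Hd.append H₁' H₂') := by
  induction H₁ generalizing H₁' with
  | hole => cases h₁; exact h₂
  | push N a H ih => cases h₁ with
      | hpush a hN hH => exact PdG.hpush a hN (ih hH)
  | pop a H ih => cases h₁ with
      | hpop a hH => exact PdG.hpop a (ih hH)

theorem Pd.plug_cong {H H' : Hd A} {T T' : Tm A} (hH : PHr H H') (hT : Pd T T') :
    Pd (H.plug T) (H'.plug T') := by
  induction H generalizing H' with
  | hole => cases hH; exact hT
  | push N a H ih => cases hH with
      | hpush a hN hHH => exact PdG.push a hN (ih hHH)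
  | pop a H ih => cases hH with
      | hpop a hHH => exact PdG.pop a (ih hHH)

end FMC

namespace FMC
variable {A : Type}
open Tm

theorem liftFn_succ' (b : Nat) (f : Nat → Nat) :
    liftFn (b+1) f = liftF (liftFn b f) := by
  induction b generalizing f with
  | zero => rfl
  | succ b ih => show liftFn (b+1) (liftF f) = _; rw [ih]; rfl

theorem liftFn_add (b x : Nat) (f : Nat → Nat) :
    liftFn b f (x + b) = f x + b := by
  induction b generalizing f x with
  | zero => rfl
  | succ b ih =>
      show liftFn b (liftF f) (x + (b+1)) = _
      have hx : x + (b+1) = (x+1) + b := by omega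
      rw [hx, ih]
      show (f x + 1) + b = f x + (b + 1)
      omega

/-- renaming a redex reduct -/
theorem rename_redex_reduct (f : Nat → Nat) (H : Hd A) (N M : Tm A) :
    rename f (H.plug (Tm.subst1 (rename (· + H.binders) N) M))
      = (Hd.renameH f H).plug
          (Tm.subst1 (rename (· + H.binders) (rename f N)) (rename (liftFn (H.binders+1) f) M)) := by
  rw [Hd.rename_plug, rename_subst1, rename_rename, ← liftFn_succ']
  have e : (fun n => liftFn H.binders f (n + H.binders)) = (fun n : Nat => (f n) + H.binders) := by
    funext n; exact liftFn_add _ _ _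
  rw [e, rename_rename]

/-- substituting into a redex reduct -/
theorem subst_redex_reduct (σ : Nat → Tm A) (H : Hd A) (N M : Tm A) :
    subst σ (H.plug (Tm.subst1 (rename (· + H.binders) N) M))
      = (Hd.substH σ H).plug
          (Tm.subst1 (rename (· + H.binders) (subst σ N)) (subst (liftSn (H.binders+1) σ) M)) := by
  rw [Hd.subst_plug, subst_subst1, ← liftSn_succ', subst_rename]
  have e : (fun n => liftSn H.binders σ (n + H.binders)) = (fun n : Nat => rename (· + H.binders) (σ n)) := by
    funext n; exact liftSn_add _ _ _
  rw [e, ← rename_subst]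

/-- composing a redex reduct -/
theorem comp_redex_reduct (H : Hd A) (N M P : Tm A) :
    Tm.comp (H.plug (Tm.subst1 (rename (· + H.binders) N) M)) P
      = H.plug (Tm.subst1 (rename (· + H.binders) N)
          (Tm.comp M (rename (· + (H.binders+1)) P))) := by
  rw [Hd.comp_plug, subst1_eq, subst1_eq, subst_comp]
  have e : Tm.subst (sone (rename (· + H.binders) N)) (rename (· + (H.binders+1)) P)
      = rename (· + H.binders) P := by
    rw [← subst1_eq]; exact subst1_rename_shift _ _ _
  rw [e]

/-- decomposing the source of a redex -/
theorem redex_src_rename (f : Nat → Nat) (a : A) (H : Hd A) (N M : Tm A) :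
    rename f (.push N a (H.plug (.pop a M)))
      = .push (rename f N) a ((Hd.renameH f H).plug (.pop a (rename (liftFn (H.binders+1) f) M))) := by
  show Tm.push (rename f N) a (rename f (H.plug (.pop a M))) = _
  rw [Hd.rename_plug]
  show Tm.push _ a ((Hd.renameH f H).plug (Tm.pop a (rename (liftF (liftFn H.binders f)) M))) = _
  rw [← liftFn_succ']

theorem redex_src_subst (σ : Nat → Tm A) (a : A) (H : Hd A) (N M : Tm A) :
    subst σ (.push N a (H.plug (.pop a M)))
      = .push (subst σ N) a ((Hd.substH σ H).plug (.pop a (subst (liftSn (H.binders+1) σ) M))) := by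
  show Tm.push (subst σ N) a (subst σ (H.plug (.pop a M))) = _
  rw [Hd.subst_plug]
  show Tm.push _ a ((Hd.substH σ H).plug (Tm.pop a (subst (liftS (liftSn H.binders σ)) M))) = _
  rw [← liftSn_succ']

theorem redex_src_comp (a : A) (H : Hd A) (N M P : Tm A) :
    Tm.comp (.push N a (H.plug (.pop a M))) P
      = .push N a (H.plug (.pop a (Tm.comp M (rename (· + (H.binders+1)) P)))) := by
  show Tm.push N a (Tm.comp (H.plug (.pop a M)) P) = _
  rw [Hd.comp_plug]
  show Tm.push N a (H.plug (Tm.pop a (Tm.comp M (rename Nat.succ (rename (· + H.binders) P))))) = _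
  rw [rename_rename]
  have e : (fun n => (n + H.binders) + 1) = (fun n : Nat => n + (H.binders + 1)) := by
    funext n; omega
  rw [show (fun n => Nat.succ (n + H.binders)) = (fun n : Nat => n + (H.binders + 1)) from by funext n; omega]

def RenGoal : (Tm A ⊕ Hd A) → (Tm A ⊕ Hd A) → Prop
  | .inl M, .inl M' => ∀ f, Pd (rename f M) (rename f M')
  | .inr H, .inr H' => ∀ f, PHr (Hd.renameH f H) (Hd.renameH f H')
  | _, _ => True

theorem pdg_rename {x y : Tm A ⊕ Hd A} (h : PdG x y) : RenGoal x y := by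
  induction h with
  | star => intro f; exact PdG.star
  | @var M M' n _ ih =>
      intro f
      show Pd (.var (f n) (rename f M)) (.var (f n) (rename f M'))
      exact PdG.var _ (ih f)
  | @push N N' M M' a _ _ ihN ihM =>
      intro f
      show Pd (.push (rename f N) a (rename f M)) (.push (rename f N') a (rename f M'))
      exact PdG.push a (ihN f) (ihM f)
  | @pop M M' a _ ih =>
      intro f
      show Pd (.pop a (rename (liftF f) M)) (.pop a (rename (liftF f) M'))
      exact PdG.pop a (ih (liftF f))
  | hhole => intro f; exact PdG.hhole
  | @hpush N N' H H' a _ _ ihN ihH =>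
      intro f
      exact PdG.hpush a (ihN f) (ihH f)
  | @hpop H H' a _ ih =>
      intro f
      show PHr (.pop a (Hd.renameH (liftF f) H)) (.pop a (Hd.renameH (liftF f) H'))
      exact PdG.hpop a (ih (liftF f))
  | @redex N N' M M' H H' a ha hN hH hM ihN ihH ihM =>
      intro f
      show Pd (rename f (.push N a (H.plug (.pop a M))))
              (rename f (H'.plug (Tm.subst1 (rename (· + H'.binders) N') M')))
      have hb : H'.binders = H.binders := (PHr.locs_eq hH).2
      rw [redex_src_rename, rename_redex_reduct, hb]
      have red := PdG.redex (H := Hd.renameH f H) (H' := Hd.renameH f H') a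
        (by rw [Hd.locs_renameH]; exact ha) (ihN f) (ihH f) (ihM (liftFn (H.binders+1) f))
      rw [Hd.binders_renameH, hb] at red
      exact red

theorem Pd.rename {M M' : Tm A} (h : Pd M M') (f : Nat → Nat) :
    Pd (Tm.rename f M) (Tm.rename f M') := pdg_rename h f

theorem PHr.rename {H H' : Hd A} (h : PHr H H') (f : Nat → Nat) :
    PHr (Hd.renameH f H) (Hd.renameH f H') := pdg_rename h f

def CompGoal : (Tm A ⊕ Hd A) → (Tm A ⊕ Hd A) → Prop
  | .inl M, .inl M' => ∀ P P', Pd P P' → Pd (Tm.comp M P) (Tm.comp M' P')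
  | _, _ => True

theorem pdg_comp {x y : Tm A ⊕ Hd A} (h : PdG x y) : CompGoal x y := by
  induction h with
  | star => intro P P' hP; exact hP
  | @var M M' n _ ih =>
      intro P P' hP
      show Pd (.var n (Tm.comp M P)) (.var n (Tm.comp M' P'))
      exact PdG.var n (ih P P' hP)
  | @push N N' M M' a hN _ ihN ihM =>
      intro P P' hP
      show Pd (.push N a (Tm.comp M P)) (.push N' a (Tm.comp M' P'))
      exact PdG.push a hN (ihM P P' hP)
  | @pop M M' a _ ih =>
      intro P P' hP
      show Pd (.pop a (Tm.comp M (rename Nat.succ P))) (.pop a (Tm.comp M' (rename Nat.succ P')))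
      exact PdG.pop a (ih _ _ (Pd.rename hP Nat.succ))
  | hhole => trivial
  | hpush a _ _ _ _ => trivial
  | hpop a _ _ => trivial
  | @redex N N' M M' H H' a ha hN hH hM ihN ihH ihM =>
      intro P P' hP
      show Pd (Tm.comp (.push N a (H.plug (.pop a M))) P)
              (Tm.comp (H'.plug (Tm.subst1 (rename (· + H'.binders) N') M')) P')
      have hb : H'.binders = H.binders := (PHr.locs_eq hH).2
      rw [redex_src_comp, comp_redex_reduct, hb]
      have red := PdG.redex (H := H) (H' := H') a ha hN hH
        (ihM (rename (· + (H.binders+1)) P) (rename (· + (H.binders+1)) P') (Pd.rename hP _))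
      rw [hb] at red
      exact red

theorem Pd.comp {M M' P P' : Tm A} (h : Pd M M') (hP : Pd P P') :
    Pd (Tm.comp M P) (Tm.comp M' P') := pdg_comp h P P' hP

def PdS (σ σ' : Nat → Tm A) : Prop := ∀ n, Pd (σ n) (σ' n)

theorem PdS.liftS {σ σ' : Nat → Tm A} (h : PdS σ σ') : PdS (liftS σ) (liftS σ') := by
  intro n; cases n with
  | zero => exact Pd.refl _
  | succ n => exact Pd.rename (h n) Nat.succ

theorem PdS.liftSn {σ σ' : Nat → Tm A} (h : PdS σ σ') (b : Nat) :
    PdS (liftSn b σ) (liftSn b σ') := by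
  induction b generalizing σ σ' with
  | zero => exact h
  | succ b ih => exact ih h.liftS

def SubstGoal : (Tm A ⊕ Hd A) → (Tm A ⊕ Hd A) → Prop
  | .inl M, .inl M' => ∀ σ σ', PdS σ σ' → Pd (subst σ M) (subst σ' M')
  | .inr H, .inr H' => ∀ σ σ', PdS σ σ' → PHr (Hd.substH σ H) (Hd.substH σ' H')
  | _, _ => True

theorem pdg_subst {x y : Tm A ⊕ Hd A} (h : PdG x y) : SubstGoal x y := by
  induction h with
  | star => intro σ σ' hσ; exact PdG.star
  | @var M M' n _ ih =>
      intro σ σ' hσ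
      show Pd (Tm.comp (σ n) (subst σ M)) (Tm.comp (σ' n) (subst σ' M'))
      exact Pd.comp (hσ n) (ih σ σ' hσ)
  | @push N N' M M' a _ _ ihN ihM =>
      intro σ σ' hσ
      show Pd (.push (subst σ N) a (subst σ M)) (.push (subst σ' N') a (subst σ' M'))
      exact PdG.push a (ihN σ σ' hσ) (ihM σ σ' hσ)
  | @pop M M' a _ ih =>
      intro σ σ' hσ
      show Pd (.pop a (subst (liftS σ) M)) (.pop a (subst (liftS σ') M'))
      exact PdG.pop a (ih _ _ hσ.liftS)
  | hhole => intro σ σ' hσ; exact PdG.hhole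
  | @hpush N N' H H' a _ _ ihN ihH =>
      intro σ σ' hσ
      exact PdG.hpush a (ihN σ σ' hσ) (ihH σ σ' hσ)
  | @hpop H H' a _ ih =>
      intro σ σ' hσ
      show PHr (.pop a (Hd.substH (liftS σ) H)) (.pop a (Hd.substH (liftS σ') H'))
      exact PdG.hpop a (ih _ _ hσ.liftS)
  | @redex N N' M M' H H' a ha hN hH hM ihN ihH ihM =>
      intro σ σ' hσ
      show Pd (subst σ (.push N a (H.plug (.pop a M))))
              (subst σ' (H'.plug (Tm.subst1 (rename (· + H'.binders) N') M')))
      have hb : H'.binders = H.binders := (PHr.locs_eq hH).2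
      rw [redex_src_subst, subst_redex_reduct, hb]
      have red := PdG.redex (H := Hd.substH σ H) (H' := Hd.substH σ' H') a
        (by rw [Hd.locs_substH]; exact ha) (ihN σ σ' hσ) (ihH σ σ' hσ)
        (ihM (liftSn (H.binders+1) σ) (liftSn (H.binders+1) σ') (hσ.liftSn _))
      rw [Hd.binders_substH, hb] at red
      exact red

theorem Pd.subst {M M' : Tm A} {σ σ' : Nat → Tm A} (h : Pd M M') (hσ : PdS σ σ') :
    Pd (Tm.subst σ M) (Tm.subst σ' M') := pdg_subst h σ σ' hσ

theorem PHr.subst {H H' : Hd A} {σ σ' : Nat → Tm A} (h : PHr H H') (hσ : PdS σ σ') :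
    PHr (Hd.substH σ H) (Hd.substH σ' H') := pdg_subst h σ σ' hσ

theorem PdS.sone {X X' : Tm A} (h : Pd X X') : PdS (sone X) (sone X') := by
  intro n; cases n with
  | zero => exact h
  | succ n => exact Pd.refl _

theorem Pd.subst1 {X X' Y Y' : Tm A} (hX : Pd X X') (hY : Pd Y Y') :
    Pd (Tm.subst1 X Y) (Tm.subst1 X' Y') := by
  rw [subst1_eq, subst1_eq]; exact hY.subst (PdS.sone hX)

end FMC

namespace FMC
variable {A : Type}
open Tm

def sizeT : Tm A → Nat
  | .star => 1
  | .var _ M => 1 + sizeT M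
  | .push N _ M => 1 + sizeT N + sizeT M
  | .pop _ M => 1 + sizeT M

def sizeH : Hd A → Nat
  | .hole => 0
  | .push N _ H => 1 + sizeT N + sizeH H
  | .pop _ H => 1 + sizeH H

theorem sizeT_pos (M : Tm A) : 1 ≤ sizeT M := by
  cases M <;> simp [sizeT] <;> omega

theorem size_plug (H : Hd A) (T : Tm A) : sizeT (H.plug T) = sizeH H + sizeT T := by
  induction H with
  | hole => simp [Hd.plug, sizeH]
  | push N a H ih => simp [Hd.plug, sizeH, sizeT, ih]; omega
  | pop a H ih => simp [Hd.plug, sizeH, sizeT, ih]; omega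

theorem sizeH_append (H G : Hd A) : sizeH (Hd.append H G) = sizeH H + sizeH G := by
  induction H with
  | hole => simp [Hd.append, sizeH]
  | push N a H ih => simp [Hd.append, sizeH, ih]; omega
  | pop a H ih => simp [Hd.append, sizeH, ih]; omega

/-- trichotomy for double spine decompositions -/
theorem plug_pop_tri {H₂ : Hd A} {H₃ : Hd A} {a c : A} {M0 M₃ : Tm A}
    (h : H₂.plug (.pop a M0) = H₃.plug (.pop c M₃)) :
    (H₂ = H₃ ∧ a = c ∧ M0 = M₃)
    ∨ (∃ H₄, H₂ = Hd.append H₃ (Hd.pop c H₄) ∧ M₃ = H₄.plug (.pop a M0))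
    ∨ (∃ H₅, H₃ = Hd.append H₂ (Hd.pop a H₅) ∧ M0 = H₅.plug (.pop c M₃)) := by
  induction H₂ generalizing H₃ with
  | hole =>
      cases H₃ with
      | hole =>
          simp [Hd.plug] at h
          exact Or.inl ⟨rfl, h.1, h.2⟩
      | push N b H =>
          simp [Hd.plug] at h
      | pop b H =>
          simp [Hd.plug] at h
          obtain ⟨rfl, h2⟩ := h
          exact Or.inr (Or.inr ⟨H, rfl, h2⟩)
  | push N b H ih =>
      cases H₃ with
      | hole =>
          simp [Hd.plug] at h
      | push N' b' H' =>
          simp [Hd.plug] at h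
          obtain ⟨rfl, rfl, h3⟩ := h
          rcases ih h3 with ⟨rfl, h⟩ | ⟨H₄, rfl, h⟩ | ⟨H₅, rfl, h⟩
          · exact Or.inl ⟨rfl, h⟩
          · exact Or.inr (Or.inl ⟨H₄, rfl, h⟩)
          · exact Or.inr (Or.inr ⟨H₅, rfl, h⟩)
      | pop b' H' =>
          simp [Hd.plug] at h
  | pop b H ih =>
      cases H₃ with
      | hole =>
          simp [Hd.plug] at h
          obtain ⟨rfl, h2⟩ := h
          exact Or.inr (Or.inl ⟨H, rfl, h2.symm⟩)
      | push N' b' H' =>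
          simp [Hd.plug] at h
      | pop b' H' =>
          simp [Hd.plug] at h
          obtain ⟨rfl, h3⟩ := h
          rcases ih h3 with ⟨rfl, h⟩ | ⟨H₄, rfl, h⟩ | ⟨H₅, rfl, h⟩
          · exact Or.inl ⟨rfl, h⟩
          · exact Or.inr (Or.inl ⟨H₄, rfl, h⟩)
          · exact Or.inr (Or.inr ⟨H₅, rfl, h⟩)

/-- uniqueness of redex decomposition at a fixed location -/
theorem plug_pop_unique {H₂ H₃ : Hd A} {a : A} {M0 M₃ : Tm A}
    (h : H₂.plug (.pop a M0) = H₃.plug (.pop a M₃))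
    (h₂ : a ∉ H₂.locs) (h₃ : a ∉ H₃.locs) : H₂ = H₃ ∧ M0 = M₃ := by
  rcases plug_pop_tri h with ⟨rfl, _, rfl⟩ | ⟨H₄, rfl, _⟩ | ⟨H₅, rfl, _⟩
  · exact ⟨rfl, rfl⟩
  · exfalso; apply h₂; rw [Hd.locs_append]; simp [Hd.locs]
  · exfalso; apply h₃; rw [Hd.locs_append]; simp [Hd.locs]

/-- diamond for head-context reduction, given diamond for smaller terms -/
theorem phr_dia {n : Nat}
    (dia : ∀ M N P : Tm A, sizeT M < n → Pd M N → Pd M P → ∃ Q, Pd N Q ∧ Pd P Q)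
    {H H₁ H₂ : Hd A} (hs : sizeH H ≤ n) (h₁ : PHr H H₁) (h₂ : PHr H H₂) :
    ∃ H₃, PHr H₁ H₃ ∧ PHr H₂ H₃ := by
  induction H generalizing H₁ H₂ with
  | hole => cases h₁; cases h₂; exact ⟨.hole, PdG.hhole, PdG.hhole⟩
  | push N a H ih =>
      cases h₁ with | hpush _ hN₁ hH₁ =>
      cases h₂ with | hpush _ hN₂ hH₂ =>
      obtain ⟨N₃, g₁, g₂⟩ := dia N _ _ (by simp [sizeH] at hs ⊢; omega) hN₁ hN₂
      obtain ⟨H₃, k₁, k₂⟩ := ih (by simp [sizeH] at hs ⊢; omega) hH₁ hH₂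
      exact ⟨.push N₃ a H₃, PdG.hpush a g₁ k₁, PdG.hpush a g₂ k₂⟩
  | pop a H ih =>
      cases h₁ with | hpop _ hH₁ =>
      cases h₂ with | hpop _ hH₂ =>
      obtain ⟨H₃, k₁, k₂⟩ := ih (by simp [sizeH] at hs ⊢; omega) hH₁ hH₂
      exact ⟨.pop a H₃, PdG.hpop a k₁, PdG.hpop a k₂⟩

end FMC

namespace FMC
variable {A : Type}
open Tm

def DiaP (A : Type) (n : Nat) : Prop :=
  ∀ M N P : Tm A, sizeT M ≤ n → Pd M N → Pd M P → ∃ Q, Pd N Q ∧ Pd P Q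

def SLemP (A : Type) (n : Nat) : Prop :=
  ∀ (a : A) (H : Hd A) (M0 K : Tm A) (H' : Hd A) (M0' N' N'' : Tm A) (k : Nat),
    sizeT (H.plug (.pop a M0)) ≤ n → a ∉ H.locs →
    Pd (H.plug (.pop a M0)) K → PHr H H' → Pd M0 M0' → Pd N' N'' →
    ∃ (G : Hd A) (M₁ : Tm A) (G'' : Hd A) (M₁'' : Tm A),
      K = G.plug (.pop a M₁) ∧ a ∉ G.locs ∧ PHr G G'' ∧ Pd M₁ M₁'' ∧
      Pd (H'.plug (Tm.subst1 (rename (· + (H'.binders + k)) N') M0'))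
         (G''.plug (Tm.subst1 (rename (· + (G''.binders + k)) N'') M₁''))

theorem pd_push_inv {B T K : Tm A} {c : A} (h : Pd (.push B c T) K) :
    (∃ B1 K₂, K = .push B1 c K₂ ∧ Pd B B1 ∧ Pd T K₂) ∨
    (∃ (H₃ : Hd A) (M₃ : Tm A) (H₃' : Hd A) (Bp M₃' : Tm A),
      T = H₃.plug (.pop c M₃) ∧ c ∉ H₃.locs ∧ Pd B Bp ∧ PHr H₃ H₃' ∧ Pd M₃ M₃' ∧
      K = H₃'.plug (Tm.subst1 (rename (· + H₃'.binders) Bp) M₃')) := by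
  cases h with
  | push _ hB hT => exact Or.inl ⟨_, _, rfl, hB, hT⟩
  | redex _ hc hB hH hM => exact Or.inr ⟨_, _, _, _, _, rfl, hc, hB, hH, hM, rfl⟩

theorem slem_step (n : Nat) (IH : ∀ m, m < n → DiaP A m ∧ SLemP A m) : SLemP A n := by
  intro a H M0 K H' M0' N' N'' k hsize ha hred hH hM0 hNN
  have dia : ∀ M N P : Tm A, sizeT M < n → Pd M N → Pd M P → ∃ Q, Pd N Q ∧ Pd P Q :=
    fun M N P hs => (IH (sizeT M) hs).1 M N P (Nat.le_refl _)
  cases H with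
  | hole =>
      cases hred with
      | pop _ hM0K =>
        cases hH
        obtain ⟨M'', h1, h2⟩ := dia M0 _ M0' (by simp [Hd.plug, sizeT] at hsize ⊢; omega) hM0K hM0
        exact ⟨.hole, _, .hole, M'', rfl, by simp [Hd.locs], PdG.hhole, h1,
          Pd.subst1 (Pd.rename hNN _) h2⟩
  | pop c H₂ =>
      have hac : a ≠ c ∧ a ∉ H₂.locs := by
        simp [Hd.locs] at ha; exact ha
      cases hH with | @hpop _ Hp2 _ hH₂' =>
      cases hred with
      | pop _ hK₂ =>
        obtain ⟨G₂, M₁, G₂'', M₁'', rfl, haG₂, hG₂, hM₁, R⟩ :=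
          (IH (sizeT (H₂.plug (.pop a M0)))
            (by simp [Hd.plug, sizeT] at hsize ⊢; omega)).2
            a H₂ M0 _ Hp2 M0' N' N'' (k+1) (Nat.le_refl _) hac.2 hK₂ hH₂' hM0 hNN
        refine ⟨.pop c G₂, M₁, .pop c G₂'', M₁'', rfl,
          by simp [Hd.locs]; exact ⟨hac.1, haG₂⟩, PdG.hpop c hG₂, hM₁, ?_⟩
        show Pd (.pop c (Hp2.plug (Tm.subst1 (rename (· + (Hp2.binders + 1 + k)) N') M0')))
                (.pop c (Hd.plug G₂'' (Tm.subst1 (rename (· + (Hd.binders G₂'' + 1 + k)) N'') M₁'')))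
        rw [show Hp2.binders + 1 + k = Hp2.binders + (k+1) from by omega,
            show Hd.binders G₂'' + 1 + k = Hd.binders G₂'' + (k+1) from by omega]
        exact PdG.pop c R
  | push B c H₂ =>
      have hac : a ≠ c ∧ a ∉ H₂.locs := by
        simp [Hd.locs] at ha; exact ha
      cases hH with | @hpush _ B' _ Hp2 _ hB' hH₂' =>
      rcases pd_push_inv hred with ⟨B1, K₂, rfl, hB1, hK₂⟩ |
        ⟨H₃, M₃, H₃', Bp, M₃', hT, hcH₃, hBB, hH₃, hM₃, rfl⟩
      · -- congruence case
        obtain ⟨G₂, M₁, G₂'', M₁'', rfl, haG₂, hG₂, hM₁, R⟩ :=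
          (IH (sizeT (H₂.plug (.pop a M0)))
            (by simp [Hd.plug, sizeT] at hsize ⊢; omega)).2
            a H₂ M0 _ Hp2 M0' N' N'' k (Nat.le_refl _) hac.2 hK₂ hH₂' hM0 hNN
        obtain ⟨B'', hB1'', hB''⟩ := dia B _ B'
          (by simp [Hd.plug, sizeT] at hsize ⊢; omega) hB1 hB'
        refine ⟨.push _ c G₂, M₁, .push B'' c G₂'', M₁'', rfl,
          by simp [Hd.locs]; exact ⟨hac.1, haG₂⟩, PdG.hpush c hB1'' hG₂, hM₁, ?_⟩
        exact PdG.push c hB'' R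
      · -- root redex contracted on this side
        rcases plug_pop_tri hT with ⟨rfl, rfl, rfl⟩ | ⟨H₄, rfl, rfl⟩ | ⟨H₅, rfl, rfl⟩
        · exact absurd rfl hac.1
        · -- (b1): the contracted c-redex ends inside the spine, before the a-pop
          have haH₃ : a ∉ H₃.locs ∧ a ∉ H₄.locs := by
            have h2 := hac.2; rw [Hd.locs_append] at h2; simp [Hd.locs] at h2
            exact ⟨h2.1, h2.2.2⟩
          obtain ⟨H₃p, H₄p, rfl, hH₃p, hH₄p⟩ := PHr.append_pop_inv hH₂'
          have eb3 : H₃'.binders = H₃.binders := (PHr.locs_eq hH₃).2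
          have eb3p : H₃p.binders = H₃.binders := (PHr.locs_eq hH₃p).2
          have eb4p : H₄p.binders = H₄.binders := (PHr.locs_eq hH₄p).2
          have hsz : sizeT (Hd.plug (.push B c (Hd.append H₃ (Hd.pop c H₄))) (Tm.pop a M0)) ≤ n := hsize
          rw [size_plug] at hsz
          simp only [sizeH, sizeH_append, size_plug, sizeT] at hsz
          obtain ⟨G₄, M₁, G₄'', M₁'', hM₃'eq, haG₄, hG₄, hM₁, R₄⟩ :=
            (IH (sizeT (H₄.plug (.pop a M0))) (by rw [size_plug]; simp [sizeT]; omega)).2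
              a H₄ M0 M₃' H₄p M0' N' N'' (k + H₃.binders + 1) (Nat.le_refl _)
              haH₃.2 hM₃ hH₄p hM0 hNN
          subst hM₃'eq
          obtain ⟨B'', hBpB, hB'B⟩ := dia B Bp B' (by omega) hBB hB'
          obtain ⟨H₃'', hH₃'d, hH₃pd⟩ := phr_dia dia (by omega) hH₃ hH₃p
          have eb3d : H₃''.binders = H₃.binders := by rw [(PHr.locs_eq hH₃'d).2, eb3]
          have eb4 : G₄''.binders = G₄.binders := (PHr.locs_eq hG₄).2
          -- abbreviations
          rw [eb3]
          refine ⟨Hd.append H₃' (Hd.substH (sone (rename (· + H₃.binders) Bp)) G₄),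
            subst (liftSn (G₄.binders+1) (sone (rename (· + H₃.binders) Bp))) M₁,
            Hd.append H₃'' (Hd.substH (sone (rename (· + H₃.binders) B'')) G₄''),
            subst (liftSn (G₄.binders+1) (sone (rename (· + H₃.binders) B''))) M₁'',
            ?_, ?_, ?_, ?_, ?_⟩
          · -- K decomposition
            rw [Hd.plug_append, subst1_eq, Hd.subst_plug]
            show Hd.plug H₃' (Hd.plug _ (Tm.pop a (subst (liftS (liftSn G₄.binders _)) M₁))) = _
            rw [← liftSn_succ']
          · -- a ∉ locs
            rw [Hd.locs_append, Hd.locs_substH]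
            simp
            refine ⟨?_, haG₄⟩
            rw [(PHr.locs_eq hH₃).1]; exact haH₃.1
          · exact PHr.append hH₃'d (PHr.subst hG₄ (PdS.sone (Pd.rename hBpB _)))
          · exact Pd.subst hM₁ ((PdS.sone (Pd.rename hBpB _)).liftSn _)
          · -- the commuted reduction
            have ebL : (Hd.push B' c (H₃p.append (Hd.pop c H₄p))).binders
                = H₃.binders + 1 + H₄.binders := by
              show (H₃p.append (Hd.pop c H₄p)).binders = _
              rw [Hd.binders_append]
              show H₃p.binders + (H₄p.binders + 1) = _
              omega
            have ebR : (H₃''.append (Hd.substH (sone (rename (· + H₃.binders) B'')) G₄'')).binders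
                = H₃.binders + G₄.binders + k - k := by
              rw [Hd.binders_append, Hd.binders_substH, eb3d, eb4]; omega
            rw [ebL, ebR]
            rw [show H₃.binders + G₄.binders + k - k = H₃.binders + G₄.binders from by omega]
            have lhs_eq : ∀ T : Tm A, (Hd.push B' c (H₃p.append (Hd.pop c H₄p))).plug T
                = Tm.push B' c (H₃p.plug (.pop c (H₄p.plug T))) := by
              intro T
              show Tm.push B' c ((H₃p.append (Hd.pop c H₄p)).plug T) = _
              rw [Hd.plug_append]
              rfl
            rw [lhs_eq]
            have hMcomp : Pd (H₄p.plug (Tm.subst1 (rename (· + (H₃.binders + 1 + H₄.binders + k)) N') M0'))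
                (G₄''.plug (Tm.subst1 (rename (· + (G₄''.binders + (k + H₃.binders + 1))) N'') M₁'')) := by
              rw [show H₃.binders + 1 + H₄.binders + k = H₄p.binders + (k + H₃.binders + 1) from by
                rw [eb4p]; omega]
              exact R₄
            have red := PdG.redex (N := B') (N' := B'') (H := H₃p) (H' := H₃'') c
              (by rw [(PHr.locs_eq hH₃p).1]; exact hcH₃) hB'B hH₃pd hMcomp
            rw [eb3d] at red
            have e2 : Tm.subst1 (rename (· + H₃.binders) B'')
                  (G₄''.plug (Tm.subst1 (rename (· + (G₄''.binders + (k + H₃.binders + 1))) N'') M₁''))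
                = (Hd.substH (sone (rename (· + H₃.binders) B'')) G₄'').plug
                    (Tm.subst1 (rename (· + (H₃.binders + G₄.binders + k)) N'')
                      (subst (liftSn (G₄.binders + 1) (sone (rename (· + H₃.binders) B''))) M₁'')) := by
              rw [subst1_eq, Hd.subst_plug, eb4, subst_subst1, ← liftSn_succ']
              rw [show G₄.binders + (k + H₃.binders + 1) = G₄.binders + 1 + (k + H₃.binders) from by omega]
              rw [liftSn_sone_rename]
              rw [show G₄.binders + (k + H₃.binders) = H₃.binders + G₄.binders + k from by omega]
            rw [show H₃.binders + 1 + H₄.binders + k = H₃.binders + 1 + H₄.binders + k from rfl]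
            have final_eq : (H₃''.append (Hd.substH (sone (rename (· + H₃.binders) B'')) G₄'')).plug
                  (Tm.subst1 (rename (· + (H₃.binders + G₄.binders + k)) N'')
                    (subst (liftSn (G₄.binders + 1) (sone (rename (· + H₃.binders) B''))) M₁''))
                = H₃''.plug (Tm.subst1 (rename (· + H₃.binders) B'')
                    (G₄''.plug (Tm.subst1 (rename (· + (G₄''.binders + (k + H₃.binders + 1))) N'') M₁''))) := by
              rw [Hd.plug_append, e2]
            rw [final_eq]
            exact red
        · -- (b2): the contracted c-redex starts in the spine but its pop is inside M0
          have hc2 : c ∉ H₂.locs ∧ c ≠ a ∧ c ∉ H₅.locs := by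
            rw [Hd.locs_append] at hcH₃; simp [Hd.locs] at hcH₃
            exact ⟨hcH₃.1, hcH₃.2.1, hcH₃.2.2⟩
          obtain ⟨H₂d, H₅d, rfl, hH₂d, hH₅d⟩ := PHr.append_pop_inv hH₃
          have eb2d : H₂d.binders = H₂.binders := (PHr.locs_eq hH₂d).2
          have eb5d : H₅d.binders = H₅.binders := (PHr.locs_eq hH₅d).2
          have eb2p : Hp2.binders = H₂.binders := (PHr.locs_eq hH₂').2
          have hsz : sizeT (Hd.plug (.push B c H₂) (Tm.pop a (H₅.plug (.pop c M₃)))) ≤ n := hsize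
          rw [size_plug] at hsz
          simp only [sizeH, sizeH_append, size_plug, sizeT] at hsz
          obtain ⟨B'', hBpB, hB'B⟩ := dia B Bp B' (by omega) hBB hB'
          obtain ⟨Gx, M₁x, Gx'', M₁x'', hM0'eq, hcGx, hGx, hM₁x, Rx⟩ :=
            (IH (sizeT (H₅.plug (.pop c M₃))) (by rw [size_plug]; simp [sizeT]; omega)).2
              c H₅ M₃ M0' H₅d M₃' Bp B'' (H₂.binders + 1) (Nat.le_refl _)
              hc2.2.2 hM0 hH₅d hM₃ hBpB
          subst hM0'eq
          obtain ⟨H₂'', hH₂dd, hH₂pd⟩ := phr_dia dia (by omega) hH₂d hH₂'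
          have eb2dd : H₂''.binders = H₂.binders := by rw [(PHr.locs_eq hH₂dd).2, eb2d]
          have ebGx : Gx''.binders = Gx.binders := (PHr.locs_eq hGx).2
          have ebX : (H₂d.append (Hd.pop a H₅d)).binders = H₅d.binders + (H₂.binders + 1) := by
            rw [Hd.binders_append]
            show H₂d.binders + (H₅d.binders + 1) = _
            omega
          refine ⟨H₂d,
            H₅d.plug (Tm.subst1 (rename (· + (H₅d.binders + (H₂.binders + 1))) Bp) M₃'),
            H₂'',
            Gx''.plug (Tm.subst1 (rename (· + (Gx''.binders + (H₂.binders + 1))) B'') M₁x''),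
            ?_, ?_, hH₂dd, Rx, ?_⟩
          · rw [ebX, Hd.plug_append]
            rfl
          · rw [(PHr.locs_eq hH₂d).1]; exact hac.2
          · -- the commuted reduction
            have ebP : (Hd.push B' c Hp2).binders = H₂.binders := eb2p
            rw [ebP, eb2dd]
            -- expand the left-hand side
            have lhs_eq : (Hd.push B' c Hp2).plug
                  (Tm.subst1 (rename (· + (H₂.binders + k)) N') (Gx.plug (.pop c M₁x)))
                = Tm.push B' c
                    ((Hp2.append (Hd.substH (sone (rename (· + (H₂.binders + k)) N')) Gx)).plug
                      (.pop c (subst (liftSn (Gx.binders + 1)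
                        (sone (rename (· + (H₂.binders + k)) N'))) M₁x))) := by
              show Tm.push B' c (Hp2.plug _) = _
              rw [Hd.plug_append, subst1_eq, Hd.subst_plug]
              simp only [Tm.subst]
              rw [← liftSn_succ']
            rw [lhs_eq]
            have hMcomp : Pd (subst (liftSn (Gx.binders + 1) (sone (rename (· + (H₂.binders + k)) N'))) M₁x)
                (subst (liftSn (Gx.binders + 1) (sone (rename (· + (H₂.binders + k)) N''))) M₁x'') :=
              Pd.subst hM₁x ((PdS.sone (Pd.rename hNN _)).liftSn _)
            have red := PdG.redex (N := B') (N' := B'')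
              (H := Hp2.append (Hd.substH (sone (rename (· + (H₂.binders + k)) N')) Gx))
              (H' := H₂''.append (Hd.substH (sone (rename (· + (H₂.binders + k)) N'')) Gx'')) c
              (by
                rw [Hd.locs_append, Hd.locs_substH]
                simp
                refine ⟨?_, hcGx⟩
                rw [(PHr.locs_eq hH₂').1]; exact hc2.1)
              hB'B
              (PHr.append hH₂pd (PHr.subst hGx (PdS.sone (Pd.rename hNN _))))
              hMcomp
            have ebApp : (H₂''.append (Hd.substH (sone (rename (· + (H₂.binders + k)) N'')) Gx'')).binders
                = H₂.binders + Gx.binders := by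
              rw [Hd.binders_append, Hd.binders_substH, eb2dd, ebGx]
            rw [ebApp] at red
            have final_eq : H₂''.plug (Tm.subst1 (rename (· + (H₂.binders + k)) N'')
                  (Gx''.plug (Tm.subst1 (rename (· + (Gx''.binders + (H₂.binders + 1))) B'') M₁x'')))
                = (H₂''.append (Hd.substH (sone (rename (· + (H₂.binders + k)) N'')) Gx'')).plug
                    (Tm.subst1 (rename (· + (H₂.binders + Gx.binders)) B'')
                      (subst (liftSn (Gx.binders + 1) (sone (rename (· + (H₂.binders + k)) N''))) M₁x'')) := by
              rw [Hd.plug_append]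
              congr 1
              rw [subst1_eq, Hd.subst_plug, ebGx, subst_subst1, ← liftSn_succ']
              rw [show Gx.binders + (H₂.binders + 1) = Gx.binders + 1 + H₂.binders from by omega]
              rw [liftSn_sone_rename]
              rw [show Gx.binders + H₂.binders = H₂.binders + Gx.binders from by omega]
            rw [final_eq]
            exact red

end FMC

namespace FMC
variable {A : Type}
open Tm

theorem prcase (n : Nat) (IH : ∀ m, m < n → DiaP A m ∧ SLemP A m)
    {a : A} {N0 N1 M0 M0' N' : Tm A} {H H' : Hd A} {K : Tm A}
    (hs : sizeT (Tm.push N0 a (H.plug (.pop a M0))) ≤ n)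
    (ha : a ∉ H.locs)
    (hN1 : Pd N0 N1) (hK : Pd (H.plug (.pop a M0)) K)
    (hN' : Pd N0 N') (hH : PHr H H') (hM0 : Pd M0 M0') :
    ∃ Q, Pd (.push N1 a K) Q ∧ Pd (H'.plug (Tm.subst1 (rename (· + H'.binders) N') M0')) Q := by
  have dia : ∀ M N P : Tm A, sizeT M < n → Pd M N → Pd M P → ∃ Q, Pd N Q ∧ Pd P Q :=
    fun M N P hsz => (IH (sizeT M) hsz).1 M N P (Nat.le_refl _)
  simp only [sizeT] at hs
  obtain ⟨N'', hN1'', hN''2⟩ := dia N0 N1 N' (by omega) hN1 hN'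
  obtain ⟨G, M₁, G'', M₁'', rfl, haG, hG, hM₁, R⟩ :=
    (IH (sizeT (H.plug (.pop a M0))) (by omega)).2 a H M0 K H' M0' N' N'' 0
      (Nat.le_refl _) ha hK hH hM0 hN''2
  exact ⟨G''.plug (Tm.subst1 (rename (· + G''.binders) N'') M₁''),
    PdG.redex a haG hN1'' hG hM₁, R⟩

theorem dia_step (n : Nat) (IH : ∀ m, m < n → DiaP A m ∧ SLemP A m) : DiaP A n := by
  intro M N P hs hN hP
  have dia : ∀ M N P : Tm A, sizeT M < n → Pd M N → Pd M P → ∃ Q, Pd N Q ∧ Pd P Q :=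
    fun M N P hsz => (IH (sizeT M) hsz).1 M N P (Nat.le_refl _)
  cases hN with
  | star =>
      cases hP with
      | star => exact ⟨.star, PdG.star, PdG.star⟩
  | var n₀ h1 =>
      cases hP with
      | var _ h2 =>
          simp only [sizeT] at hs
          obtain ⟨Q0, g1, g2⟩ := dia _ _ _ (by omega) h1 h2
          exact ⟨.var n₀ Q0, PdG.var n₀ g1, PdG.var n₀ g2⟩
  | pop a₀ h1 =>
      cases hP with
      | pop _ h2 =>
          simp only [sizeT] at hs
          obtain ⟨Q0, g1, g2⟩ := dia _ _ _ (by omega) h1 h2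
          exact ⟨.pop a₀ Q0, PdG.pop a₀ g1, PdG.pop a₀ g2⟩
  | @push N0 N1 T K a₀ hN1 hK =>
      rcases pd_push_inv hP with ⟨N2, K2, rfl, hN2, hK2⟩ |
        ⟨H₂, M02, H₂', N₂', M₂', rfl, hc, hN₂', hH₂, hM₂', rfl⟩
      · simp only [sizeT] at hs
        obtain ⟨N₃, g1, g2⟩ := dia _ _ _ (by omega) hN1 hN2
        obtain ⟨K₃, k1, k2⟩ := dia _ _ _ (by omega) hK hK2
        exact ⟨.push N₃ a₀ K₃, PdG.push a₀ g1 k1, PdG.push a₀ g2 k2⟩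
      · exact prcase n IH hs hc hN1 hK hN₂' hH₂ hM₂'
  | @redex N0 N₁' M01 M₁' H₁ H₁' a₀ ha hN₁' hH₁ hM₁' =>
      rcases pd_push_inv hP with ⟨N2, K2, rfl, hN2, hK2⟩ |
        ⟨H₂, M02, H₂', N₂', M₂', hTeq, hc, hN₂', hH₂, hM₂', rfl⟩
      · obtain ⟨Q, q1, q2⟩ := prcase n IH hs ha hN2 hK2 hN₁' hH₁ hM₁'
        exact ⟨Q, q2, q1⟩
      · -- redex vs redex
        obtain ⟨hHeq, hMeq⟩ := plug_pop_unique hTeq.symm hc ha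
        subst hHeq; subst hMeq
        simp only [sizeT] at hs
        rw [size_plug] at hs
        simp only [sizeT] at hs
        obtain ⟨N'', g1, g2⟩ := dia _ _ _ (by omega) hN₁' hN₂'
        obtain ⟨M'', m1, m2⟩ := dia _ _ _ (by omega) hM₁' hM₂'
        obtain ⟨H'', e1, e2⟩ := phr_dia dia (by omega) hH₁ hH₂
        have b1 : H₁'.binders = H₂.binders := (PHr.locs_eq hH₁).2
        have b2 : H₂'.binders = H₂.binders := (PHr.locs_eq hH₂).2
        refine ⟨H''.plug (Tm.subst1 (rename (· + H₂.binders) N'') M''), ?_, ?_⟩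
        · rw [b1]
          exact Pd.plug_cong e1 (Pd.subst1 (Pd.rename g1 _) m1)
        · rw [b2]
          exact Pd.plug_cong e2 (Pd.subst1 (Pd.rename g2 _) m2)

theorem dia_all : ∀ n : Nat, DiaP A n ∧ SLemP A n := by
  intro n
  induction n using Nat.strongRecOn with
  | _ n IH => exact ⟨dia_step n IH, slem_step n IH⟩

theorem Pd.diamond {M N P : Tm A} (hN : Pd M N) (hP : Pd M P) :
    ∃ Q, Pd N Q ∧ Pd P Q :=
  (dia_all (sizeT M)).1 M N P (Nat.le_refl _) hN hP

end FMC

namespace FMC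
variable {A : Type}
open Tm

theorem mhd_locs : ∀ V : MHd A, (MHd.erase V).locs = V.locs
  | .hole => rfl
  | .push N a H => by
      show a :: (MHd.erase H).locs = a :: H.locs
      rw [mhd_locs H]
  | .pop a H => by
      show a :: (MHd.erase H).locs = a :: H.locs
      rw [mhd_locs H]

mutual
theorem mtm_pd : ∀ W : MTm A, W.WF → Pd W.erase W.reduct
  | .star, _ => PdG.star
  | .var n M, h => PdG.var n (mtm_pd M h)
  | .push N a M, h => PdG.push a (mtm_pd N h.1) (mtm_pd M h.2)
  | .pop a M, h => PdG.pop a (mtm_pd M h)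
  | .redex N a H M, h =>
      PdG.redex a (by rw [mhd_locs]; exact h.1)
        (mtm_pd N h.2.1) (mhd_pd H h.2.2.1) (mtm_pd M h.2.2.2)

theorem mhd_pd : ∀ V : MHd A, V.WF → PHr V.erase V.reduct
  | .hole, _ => PdG.hhole
  | .push N a H, h => PdG.hpush a (mtm_pd N h.1) (mhd_pd H h.2)
  | .pop a H, h => PdG.hpop a (mhd_pd H h)
end

def MkGoal : (Tm A ⊕ Hd A) → (Tm A ⊕ Hd A) → Prop
  | .inl M, .inl N => ∃ W : MTm A, W.WF ∧ W.erase = M ∧ W.reduct = N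
  | .inr H, .inr H' => ∃ V : MHd A, V.WF ∧ V.erase = H ∧ V.reduct = H'
  | _, _ => True

theorem pdg_mk {x y : Tm A ⊕ Hd A} (h : PdG x y) : MkGoal x y := by
  induction h with
  | star => exact ⟨.star, trivial, rfl, rfl⟩
  | var n _ ih =>
      obtain ⟨W, wf, he, hr⟩ := ih
      exact ⟨.var n W, wf, by simp [MTm.erase, he], by simp [MTm.reduct, hr]⟩
  | push a _ _ ihN ihM =>
      obtain ⟨WN, wfN, heN, hrN⟩ := ihN
      obtain ⟨WM, wfM, heM, hrM⟩ := ihM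
      exact ⟨.push WN a WM, ⟨wfN, wfM⟩, by simp [MTm.erase, heN, heM],
        by simp [MTm.reduct, hrN, hrM]⟩
  | pop a _ ih =>
      obtain ⟨W, wf, he, hr⟩ := ih
      exact ⟨.pop a W, wf, by simp [MTm.erase, he], by simp [MTm.reduct, hr]⟩
  | redex a ha _ _ _ ihN ihH ihM =>
      obtain ⟨WN, wfN, heN, hrN⟩ := ihN
      obtain ⟨VH, wfH, heH, hrH⟩ := ihH
      obtain ⟨WM, wfM, heM, hrM⟩ := ihM
      refine ⟨.redex WN a VH WM, ⟨?_, wfN, wfH, wfM⟩,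
        by simp [MTm.erase, heN, heH, heM], by simp [MTm.reduct, hrN, hrH, hrM]⟩
      rw [← mhd_locs, heH]; exact ha
  | hhole => exact ⟨.hole, trivial, rfl, rfl⟩
  | hpush a _ _ ihN ihH =>
      obtain ⟨WN, wfN, heN, hrN⟩ := ihN
      obtain ⟨VH, wfH, heH, hrH⟩ := ihH
      exact ⟨.push WN a VH, ⟨wfN, wfH⟩, by simp [MHd.erase, heN, heH],
        by simp [MHd.reduct, hrN, hrH]⟩
  | hpop a _ ih =>
      obtain ⟨V, wf, he, hr⟩ := ih
      exact ⟨.pop a V, wf, by simp [MHd.erase, he], by simp [MHd.reduct, hr]⟩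

theorem par_iff_pd {M N : Tm A} : Par M N ↔ Pd M N := by
  constructor
  · rintro ⟨W, wf, rfl, rfl⟩
    exact mtm_pd W wf
  · intro h
    exact pdg_mk h

end FMC

/-- Parallel reduction satisfies the diamond property. -/
theorem fmc_par_diamond {A : Type} (M N P : Tm A)
    (hN : Par M N) (hP : Par M P) :
    ∃ Q : Tm A, Par N Q ∧ Par P Q := by
  rw [FMC.par_iff_pd] at hN hP
  obtain ⟨Q, q1, q2⟩ := FMC.Pd.diamond hN hP
  exact ⟨Q, FMC.par_iff_pd.mpr q1, FMC.par_iff_pd.mpr q2⟩
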